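/- arXiv:2008.02125 — 9 statements merged into one kernel-verified Lean document; each statement's English description precedes it below -/
import Mathlib

section
/- Let n ≥ 1, let α_1,…,α_n, φ_1,…,φ_n be complex numbers, let Δ be real, and let σ ∈ ℕ, τ ∈ ℤ. Define f_s = Σ_{i=1}^n α_i·exp(φ_i·s·Δ) for s ∈ ℤ, and let H be the n×n Hankel matrix with (k,ℓ) entry f_{τ+(k+ℓ)σ} for 0 ≤ k,ℓ ≤ n−1. Then H = V·Λ·A·Vᵀ, where V is the n×n matrix with (k,i) entry exp(φ_i·k·σ·Δ) for 0 ≤ k ≤ n−1, A = diag(α_1,…,α_n), and Λ = diag(exp(φ_1·τ·Δ),…,exp(φ_n·τ·Δ)). -/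
open Matrix in
theorem hankel_factorization_exp (n : ℕ) (hn : 1 ≤ n)
    (α φ : Fin n → ℂ) (Δ : ℝ) (σ : ℕ) (τ : ℤ)
    (f : ℤ → ℂ) (hf : ∀ s : ℤ, f s = ∑ i, α i * Complex.exp (φ i * s * Δ))
    (H V : Matrix (Fin n) (Fin n) ℂ)
    (hH : ∀ k ℓ : Fin n, H k ℓ = f (τ + ((k : ℤ) + (ℓ : ℤ)) * σ))
    (hV : ∀ (k : Fin n) (i : Fin n), V k i = Complex.exp (φ i * (k : ℕ) * σ * Δ)) :
    H = V * Matrix.diagonal (fun i => Complex.exp (φ i * τ * Δ))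
          * Matrix.diagonal α * Vᵀ := by
  ext k ℓ
  rw [hH, hf]
  simp only [Matrix.mul_apply, Matrix.diagonal_apply, Matrix.transpose_apply,
    mul_ite, ite_mul, mul_zero, zero_mul, Finset.sum_ite_eq, Finset.sum_ite_eq',
    Finset.mem_univ, if_true]
  refine Finset.sum_congr rfl fun i _ => ?_
  rw [hV, hV, ← Complex.exp_add, mul_comm (Complex.exp _) (α i), mul_assoc,
    mul_assoc, ← Complex.exp_add]
  congr 1
  push_cast
  ring_nf
end

section
/- Let n ≥ 1, α_i, φ_i complex (i=1,…,n), Δ real, σ ∈ ℕ, τ ∈ ℤ. Define f_s = Σ_{i=1}^n α_i·cos(φ_i·s·Δ). Let C be the n×n matrix with (k+1,ℓ+1) entry (1/4)(f_{τ+(k+ℓ)σ} + f_{τ−(k+ℓ)σ} + f_{τ+(k−ℓ)σ} + f_{τ−(k−ℓ)σ}) for 0 ≤ k,ℓ ≤ n−1. Then C = W·L·A·Wᵀ where W has (k+1,i) entry cos(φ_i·k·σ·Δ), A = diag(α_1,…,α_n), and L = diag(cos(φ_1·τ·Δ),…,cos(φ_n·τ·Δ)). -/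
open Matrix in
theorem cosine_matrix_factorization (n : ℕ) (hn : 1 ≤ n)
    (α φ : Fin n → ℂ) (Δ : ℝ) (σ : ℕ) (τ : ℤ)
    (f : ℤ → ℂ) (hf : ∀ s : ℤ, f s = ∑ i, α i * Complex.cos (φ i * s * Δ))
    (C W : Matrix (Fin n) (Fin n) ℂ)
    (hC : ∀ k ℓ : Fin n, C k ℓ =
      (1/4) * (f (τ + ((k : ℤ) + ℓ) * σ) + f (τ - ((k : ℤ) + ℓ) * σ) +
               f (τ + ((k : ℤ) - ℓ) * σ) + f (τ - ((k : ℤ) - ℓ) * σ)))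
    (hW : ∀ (k i : Fin n), W k i = Complex.cos (φ i * (k : ℕ) * σ * Δ)) :
    C = W * Matrix.diagonal (fun i => Complex.cos (φ i * τ * Δ))
          * Matrix.diagonal α * Wᵀ := by
  ext k ℓ
  have hR : (W * Matrix.diagonal (fun i => Complex.cos (φ i * τ * Δ))
      * Matrix.diagonal α * Wᵀ) k ℓ
      = ∑ i, Complex.cos (φ i * (k : ℕ) * σ * Δ) * Complex.cos (φ i * τ * Δ)
          * α i * Complex.cos (φ i * (ℓ : ℕ) * σ * Δ) := by
    rw [Matrix.mul_assoc W, Matrix.diagonal_mul_diagonal, Matrix.mul_apply]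
    simp only [Matrix.mul_diagonal, Matrix.transpose_apply, hW]
    exact Finset.sum_congr rfl fun i _ => by ring
  rw [hR, hC, hf, hf, hf, hf]
  rw [← Finset.sum_add_distrib, ← Finset.sum_add_distrib, ← Finset.sum_add_distrib,
    Finset.mul_sum]
  refine Finset.sum_congr rfl fun i _ => ?_
  have key : ∀ a b c x : ℂ,
      (1/4 : ℂ) * (x * Complex.cos (a + (b + c)) + x * Complex.cos (a - (b + c)) +
        x * Complex.cos (a + (b - c)) + x * Complex.cos (a - (b - c)))
      = Complex.cos b * Complex.cos a * x * Complex.cos c := by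
    intro a b c x
    simp [Complex.cos_add, Complex.cos_sub]
    ring
  push_cast
  rw [show φ i * ((τ : ℂ) + ((k : ℂ) + (ℓ : ℂ)) * (σ : ℂ)) * (Δ : ℂ)
      = φ i * τ * Δ + (φ i * (k : ℕ) * σ * Δ + φ i * (ℓ : ℕ) * σ * Δ) by push_cast; ring,
    show φ i * ((τ : ℂ) - ((k : ℂ) + (ℓ : ℂ)) * (σ : ℂ)) * (Δ : ℂ)
      = φ i * τ * Δ - (φ i * (k : ℕ) * σ * Δ + φ i * (ℓ : ℕ) * σ * Δ) by push_cast; ring,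
    show φ i * ((τ : ℂ) + ((k : ℂ) - (ℓ : ℂ)) * (σ : ℂ)) * (Δ : ℂ)
      = φ i * τ * Δ + (φ i * (k : ℕ) * σ * Δ - φ i * (ℓ : ℕ) * σ * Δ) by push_cast; ring,
    show φ i * ((τ : ℂ) - ((k : ℂ) - (ℓ : ℂ)) * (σ : ℂ)) * (Δ : ℂ)
      = φ i * τ * Δ - (φ i * (k : ℕ) * σ * Δ - φ i * (ℓ : ℕ) * σ * Δ) by push_cast; ring]
  exact key _ _ _ _
end

section
/- Let n ≥ 1, α_i, φ_i complex, Δ real, σ ∈ ℕ, τ ∈ ℤ. Define f_s = Σ_{i=1}^n α_i·sin(φ_i·s·Δ). Let B be the n×n matrix with (k,ℓ+1) entry (1/4)(f_{τ+(k+ℓ)σ} + f_{−τ+(k+ℓ)σ} + f_{τ+(k−ℓ)σ} + f_{−τ+(k−ℓ)σ}) for 1 ≤ k ≤ n, 0 ≤ ℓ ≤ n−1. Then B = U·L·A·Wᵀ where U has (k,i) entry sin(φ_i·k·σ·Δ), W has (ℓ+1,i) entry cos(φ_i·ℓ·σ·Δ), A = diag(α_1,…,α_n) and L = diag(cos(φ_1·τ·Δ),…,cos(φ_n·τ·Δ)).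 -/
/-!
Applying `sin (a + x) + sin (a - x) = 2 sin a cos x` twice, once in `x = φᵢτΔ` and once in
`x = φᵢℓσΔ`, turns each of the `n` sine terms of the `(k, ℓ)` entry of `B` into
`αᵢ cos (φᵢτΔ) sin (φᵢ(k+1)σΔ) cos (φᵢℓσΔ)`, which is the `i`-th summand of `(U L A Wᵀ) k ℓ`.
-/

open Complex Finset Matrix

theorem Complex.sin_add_add_sin_sub (a x : ℂ) : sin (a + x) + sin (a - x) = 2 * sin a * cos x := by
  rw [sin_add, sin_sub]
  ring

theorem Complex.sin_four_shifts (x y z : ℂ) :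
    sin (y + z + x) + sin (y + z - x) + sin (y - z + x) + sin (y - z - x) =
      4 * sin y * cos z * cos x := by
  have hplus := sin_add_add_sin_sub (y + z) x
  have hminus := sin_add_add_sin_sub (y - z) x
  have hy := sin_add_add_sin_sub y z
  linear_combination hplus + hminus + 2 * cos x * hy

theorem Matrix.mul_diagonal_mul_diagonal_mul_transpose_apply {R m n l : Type*} [Fintype n]
    [DecidableEq n] [CommSemiring R] (U : Matrix m n R) (c d : n → R) (W : Matrix l n R)
    (k : m) (j : l) :
    (U * diagonal c * diagonal d * Wᵀ) k j = ∑ i, U k i * c i * d i * W j i := by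
  simp only [mul_apply (M := U * diagonal c * diagonal d), mul_diagonal, transpose_apply]

theorem sineSum_four_shifted_samples {ι : Type*} [Fintype ι] (α φ : ι → ℂ) (Δ : ℂ) (f : ℤ → ℂ)
    (hf : ∀ s : ℤ, f s = ∑ i, α i * sin (φ i * s * Δ)) (τ a b σ : ℤ) :
    (1 / 4) * (f (τ + (a + b) * σ) + f (-τ + (a + b) * σ) +
        f (τ + (a - b) * σ) + f (-τ + (a - b) * σ)) =
      ∑ i, sin (φ i * a * σ * Δ) * cos (φ i * τ * Δ) * α i * cos (φ i * b * σ * Δ) := by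
  simp only [hf, ← sum_add_distrib, mul_sum]
  refine sum_congr rfl fun i _ => ?_
  have h := sin_four_shifts (φ i * τ * Δ) (φ i * a * σ * Δ) (φ i * b * σ * Δ)
  push_cast
  ring_nf at h ⊢
  linear_combination (α i / 4) * h

theorem sine_matrix_factorization_general (n : ℕ)
    (α φ : Fin n → ℂ) (Δ : ℝ) (σ : ℕ) (τ : ℤ)
    (f : ℤ → ℂ) (hf : ∀ s : ℤ, f s = ∑ i, α i * Complex.sin (φ i * s * Δ))
    (B U W : Matrix (Fin n) (Fin n) ℂ)
    (hB : ∀ k ℓ : Fin n, B k ℓ =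
      (1/4) * (f (τ + (((k : ℤ) + 1) + ℓ) * σ) + f (-τ + (((k : ℤ) + 1) + ℓ) * σ) +
               f (τ + (((k : ℤ) + 1) - ℓ) * σ) + f (-τ + (((k : ℤ) + 1) - ℓ) * σ)))
    (hU : ∀ (k i : Fin n), U k i = Complex.sin (φ i * ((k : ℕ) + 1) * σ * Δ))
    (hW : ∀ (ℓ i : Fin n), W ℓ i = Complex.cos (φ i * (ℓ : ℕ) * σ * Δ)) :
    B = U * Matrix.diagonal (fun i => Complex.cos (φ i * τ * Δ))
          * Matrix.diagonal α * Wᵀ := by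
  ext k ℓ
  rw [hB, mul_diagonal_mul_diagonal_mul_transpose_apply,
    sineSum_four_shifted_samples α φ Δ f hf τ ((k : ℤ) + 1) ℓ σ]
  refine sum_congr rfl fun i _ => ?_
  rw [hU, hW]
  push_cast
  rfl

open Matrix in
theorem sine_matrix_factorization (n : ℕ) (hn : 1 ≤ n)
    (α φ : Fin n → ℂ) (Δ : ℝ) (σ : ℕ) (τ : ℤ)
    (f : ℤ → ℂ) (hf : ∀ s : ℤ, f s = ∑ i, α i * Complex.sin (φ i * s * Δ))
    (B U W : Matrix (Fin n) (Fin n) ℂ)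
    (hB : ∀ k ℓ : Fin n, B k ℓ =
      (1/4) * (f (τ + (((k : ℤ) + 1) + ℓ) * σ) + f (-τ + (((k : ℤ) + 1) + ℓ) * σ) +
               f (τ + (((k : ℤ) + 1) - ℓ) * σ) + f (-τ + (((k : ℤ) + 1) - ℓ) * σ)))
    (hU : ∀ (k i : Fin n), U k i = Complex.sin (φ i * ((k : ℕ) + 1) * σ * Δ))
    (hW : ∀ (ℓ i : Fin n), W ℓ i = Complex.cos (φ i * (ℓ : ℕ) * σ * Δ)) :
    B = U * Matrix.diagonal (fun i => Complex.cos (φ i * τ * Δ))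
          * Matrix.diagonal α * Wᵀ :=
  sine_matrix_factorization_general n α φ Δ σ τ f hf B U W hB hU hW
end

section
/- Let n ≥ 1, α_i, φ_i complex, Δ real, σ ∈ ℕ, τ ∈ ℤ. Define f(t) = Σ_{i=1}^n α_i·exp(−(t−φ_i)²) and F_{τ+jσ} = exp(2τjσΔ²)·exp(j²σ²Δ²)·f((τ+jσ)Δ). Then F_{τ+jσ} = Σ_{i=1}^n α_i·exp(−(τΔ−φ_i)²)·exp(2φ_i·j·σ·Δ). -/
theorem gaussian_sample_separation (n : ℕ) (hn : 1 ≤ n)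
    (α φ : Fin n → ℂ) (Δ : ℝ) (σ : ℕ) (τ : ℤ) (j : ℕ)
    (f : ℂ → ℂ) (hf : ∀ t : ℂ, f t = ∑ i, α i * Complex.exp (-(t - φ i) ^ 2)) :
    Complex.exp (2 * τ * j * σ * Δ ^ 2) * Complex.exp ((j : ℂ) ^ 2 * σ ^ 2 * Δ ^ 2) *
        f (((τ : ℂ) + j * σ) * Δ) =
      ∑ i, α i * Complex.exp (-((τ : ℂ) * Δ - φ i) ^ 2) *
        Complex.exp (2 * φ i * j * σ * Δ) := by
  rw [hf, Finset.mul_sum]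
  refine Finset.sum_congr rfl fun i _ => ?_
  simp only [mul_comm, mul_left_comm, ← Complex.exp_add]
  ring_nf
end

section
/- Let f(z) = Σ_{i=1}^n α_i·Γ(z+φ_i) with all z+φ_i avoiding nonpositive integers, and define recursively F_0(Δ) = f(Δ) and F_j(Δ) = F_{j−1}(Δ+1) − Δ·F_{j−1}(Δ). Then F_j(Δ) = Σ_{i=1}^n α_i·φ_i^j·Γ(Δ+φ_i) for all j ≥ 0, whenever all arguments Δ+k+φ_i (0 ≤ k ≤ j) avoid nonpositive integers. -/
/-- The recursive difference scheme `F_j` built from samples of `f`. -/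
noncomputable def gammaDiff (f : ℂ → ℂ) : ℕ → ℂ → ℂ
  | 0, Δ => f Δ
  | (j + 1), Δ => gammaDiff f j (Δ + 1) - Δ * gammaDiff f j Δ

theorem gamma_diff_formula (n : ℕ) (hn : 1 ≤ n)
    (α φ : Fin n → ℂ) (Δ : ℂ) (j : ℕ)
    (f : ℂ → ℂ) (hf : ∀ z : ℂ, f z = ∑ i, α i * Complex.Gamma (z + φ i))
    (hdom : ∀ (i : Fin n) (k : ℕ), k ≤ j → ∀ m : ℕ, Δ + (k : ℂ) + φ i ≠ -(m : ℂ)) :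
    gammaDiff f j Δ = ∑ i, α i * φ i ^ j * Complex.Gamma (Δ + φ i) := by
  induction j generalizing Δ with
  | zero =>
    simp [gammaDiff, hf Δ]
  | succ j ih =>
    have h1 : gammaDiff f j (Δ + 1) = ∑ i, α i * φ i ^ j * Complex.Gamma (Δ + 1 + φ i) := by
      apply ih
      intro i k hk m
      have := hdom i (k + 1) (by omega) m
      push_cast at this ⊢
      convert this using 2
      ring
    have h2 : gammaDiff f j Δ = ∑ i, α i * φ i ^ j * Complex.Gamma (Δ + φ i) := by
      apply ih
      intro i k hk m
      exact hdom i k (by omega) m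
    show gammaDiff f j (Δ + 1) - Δ * gammaDiff f j Δ = _
    rw [h1, h2, Finset.mul_sum, ← Finset.sum_sub_distrib]
    apply Finset.sum_congr rfl
    intro i _
    have hne : Δ + φ i ≠ 0 := by
      have := hdom i 0 (by omega) 0
      simpa using this
    have hg : Complex.Gamma (Δ + 1 + φ i) = (Δ + φ i) * Complex.Gamma (Δ + φ i) := by
      have := Complex.Gamma_add_one (Δ + φ i) hne
      rw [← this]
      ring_nf
    rw [hg]
    ring
end

section
/- Let σ, τ be coprime positive integers, R > 0, and define for φ_σ, φ_τ ∈ [0, R/σ] resp. [0, R/τ] the sets Φ_{σ,1} = {φ_σ + 2Rℓ/σ : 0 ≤ ℓ ≤ ⌈σ/2⌉−1} ∩ [0,R) and Φ_{τ,1} = {φ_τ + 2Rk/τ : 0 ≤ k ≤ ⌈τ/2⌉−1} ∩ [0,R). Then Φ_{σ,1} ∩ Φ_{τ,1} contains at most one element. -/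
theorem candidate_sets_intersection_subsingleton
    (σ τ : ℕ) (hσ : 0 < σ) (hτ : 0 < τ) (hcop : Nat.Coprime σ τ)
    (R : ℝ) (hR : 0 < R) (φσ φτ : ℝ)
    (hφσ : φσ ∈ Set.Icc 0 (R / σ)) (hφτ : φτ ∈ Set.Icc 0 (R / τ)) :
    Set.Subsingleton
      (({x : ℝ | ∃ ℓ : ℕ, ℓ ≤ (σ + 1) / 2 - 1 ∧ x = φσ + 2 * R * ℓ / σ} ∩ Set.Ico 0 R) ∩
       ({x : ℝ | ∃ k : ℕ, k ≤ (τ + 1) / 2 - 1 ∧ x = φτ + 2 * R * k / τ} ∩ Set.Ico 0 R)) := by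
  rintro x ⟨⟨⟨ℓ₁, hℓ₁, hx1⟩, -⟩, ⟨k₁, hk₁, hx2⟩, -⟩ y ⟨⟨⟨ℓ₂, hℓ₂, hy1⟩, -⟩, ⟨k₂, hk₂, hy2⟩, -⟩
  have hσR : (0:ℝ) < (σ:ℝ) := by exact_mod_cast hσ
  have hτR : (0:ℝ) < (τ:ℝ) := by exact_mod_cast hτ
  -- key: ℓ₁ = ℓ₂
  have hbound : ℓ₁ < σ ∧ ℓ₂ < σ := by
    constructor <;> omega
  have key : (τ:ℤ) * ((ℓ₁:ℤ) - ℓ₂) = (σ:ℤ) * ((k₁:ℤ) - k₂) := by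
    have h1 : φσ + 2 * R * ℓ₁ / σ = φτ + 2 * R * k₁ / τ := by rw [← hx1, ← hx2]
    have h2 : φσ + 2 * R * ℓ₂ / σ = φτ + 2 * R * k₂ / τ := by rw [← hy1, ← hy2]
    have h3 : 2 * R * ((ℓ₁:ℝ) - ℓ₂) / σ = 2 * R * ((k₁:ℝ) - k₂) / τ := by
      field_simp at h1 h2 ⊢
      nlinarith [h1, h2]
    have h4 : (τ:ℝ) * ((ℓ₁:ℝ) - ℓ₂) = (σ:ℝ) * ((k₁:ℝ) - k₂) := by
      field_simp at h3
      nlinarith [h3]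
    exact_mod_cast h4
  have hdvd : (σ:ℤ) ∣ ((ℓ₁:ℤ) - ℓ₂) := by
    have hcop' : IsCoprime (σ:ℤ) (τ:ℤ) := Int.isCoprime_iff_gcd_eq_one.mpr (by
      exact_mod_cast hcop)
    exact hcop'.dvd_of_dvd_mul_left ⟨(k₁:ℤ) - k₂, key.symm ▸ rfl⟩
  have habs : |(ℓ₁:ℤ) - ℓ₂| < σ := by
    rw [abs_lt]; constructor <;> [omega; omega]
  have hℓeq : (ℓ₁:ℤ) = ℓ₂ := by
    by_contra h
    have hne : (ℓ₁:ℤ) - ℓ₂ ≠ 0 := sub_ne_zero.mpr h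
    have := Int.le_of_dvd (abs_pos.mpr hne) ((dvd_abs _ _).mpr hdvd)
    omega
  have heq : ℓ₁ = ℓ₂ := by omega
  subst heq
  rw [hx1, hy1]
end

section
/- Let σ, τ be coprime positive integers and R > 0. Suppose there exist φ₁, φ₂ ∈ [0, R) and integers 0 ≤ ℓ₁, ℓ₂ ≤ ⌈σ/2⌉−1, 0 ≤ k₁, k₂ ≤ ⌈τ/2⌉−1 with φ₁ = φ_σ + ℓ₁·2R/σ = φ_τ + k₁·2R/τ and φ₂ = 2R/σ − φ_σ + ℓ₂·2R/σ = 2R/τ − φ_τ + k₂·2R/τ for some φ_σ, φ_τ ≥ 0. Then this leads to a contradiction; i.e., if Φ_{σ,1} ∩ Φ_{τ,1} ≠ ∅ then Φ_{σ,2} ∩ Φ_{τ,2} = ∅ (assuming the pairs of sets do not coincide). -/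
/-!
Adding the two representations of `φ₁` and `φ₂` cancels `φσ` and `φτ`:
`φ₁ + φ₂ = (1 + ℓ₁ + ℓ₂) · 2R/σ = (1 + k₁ + k₂) · 2R/τ`. Hence `(1 + ℓ₁ + ℓ₂) τ = (1 + k₁ + k₂) σ`,
so by coprimality `σ ∣ 1 + ℓ₁ + ℓ₂`; as `ℓ₁, ℓ₂ < ⌈σ/2⌉` this forces `1 + ℓ₁ + ℓ₂ = σ`, i.e.
`φ₁ + φ₂ = 2R`, which is impossible for `φ₁, φ₂ < R`.
-/

lemma add_eq_one_add_add_mul {K : Type*} [CommRing K] {φ₁ φ₂ a c ℓ₁ ℓ₂ : K}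
    (h₁ : φ₁ = a + ℓ₁ * c) (h₂ : φ₂ = c - a + ℓ₂ * c) :
    φ₁ + φ₂ = (1 + ℓ₁ + ℓ₂) * c := by
  rw [h₁, h₂]; ring

lemma Nat.mul_eq_mul_of_mul_div_eq_mul_div {a b m n : ℕ} {c : ℝ} (hc : c ≠ 0) (hm : m ≠ 0)
    (hn : n ≠ 0) (h : (a : ℝ) * (c / m) = b * (c / n)) : a * n = b * m := by
  field_simp at h
  rw [mul_comm b]; exact_mod_cast h

lemma Nat.Coprime.eq_of_mul_eq_mul_of_le {m n a b : ℕ} (hmn : m.Coprime n) (ha : 0 < a)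
    (ham : a ≤ m) (h : a * n = b * m) : a = m :=
  le_antisymm ham (Nat.le_of_dvd ha (hmn.dvd_of_dvd_mul_right ⟨b, by rw [h, mul_comm]⟩))

theorem candidate_sets_lemma2_general
    (σ τ : ℕ) (hσ : 0 < σ) (hτ : 0 < τ) (hcop : Nat.Coprime σ τ)
    (R : ℝ) (φσ φτ : ℝ)
    (φ₁ φ₂ : ℝ) (hφ₁ : φ₁ ∈ Set.Ico 0 R) (hφ₂ : φ₂ ∈ Set.Ico 0 R)
    (ℓ₁ ℓ₂ k₁ k₂ : ℕ)
    (hℓ₁ : ℓ₁ ≤ (σ + 1) / 2 - 1) (hℓ₂ : ℓ₂ ≤ (σ + 1) / 2 - 1)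
    (h1σ : φ₁ = φσ + ℓ₁ * (2 * R / σ)) (h1τ : φ₁ = φτ + k₁ * (2 * R / τ))
    (h2σ : φ₂ = 2 * R / σ - φσ + ℓ₂ * (2 * R / σ))
    (h2τ : φ₂ = 2 * R / τ - φτ + k₂ * (2 * R / τ)) :
    False := by
  have hR : 0 < R := hφ₁.1.trans_lt hφ₁.2
  have hsumσ : φ₁ + φ₂ = ((1 + ℓ₁ + ℓ₂ : ℕ) : ℝ) * (2 * R / σ) := by
    push_cast; exact add_eq_one_add_add_mul h1σ h2σ
  have hsumτ : φ₁ + φ₂ = ((1 + k₁ + k₂ : ℕ) : ℝ) * (2 * R / τ) := by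
    push_cast; exact add_eq_one_add_add_mul h1τ h2τ
  have hcross : (1 + ℓ₁ + ℓ₂) * τ = (1 + k₁ + k₂) * σ :=
    Nat.mul_eq_mul_of_mul_div_eq_mul_div (by positivity) hσ.ne' hτ.ne' (hsumσ.symm.trans hsumτ)
  have hℓσ : 1 + ℓ₁ + ℓ₂ ≤ σ := by omega
  have hℓ : 1 + ℓ₁ + ℓ₂ = σ := hcop.eq_of_mul_eq_mul_of_le (by omega) hℓσ hcross
  have hsum : φ₁ + φ₂ = 2 * R := by
    rw [hsumσ, hℓ]; field_simp
  linarith [hφ₁.2, hφ₂.2]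

theorem candidate_sets_lemma2
    (σ τ : ℕ) (hσ : 0 < σ) (hτ : 0 < τ) (hcop : Nat.Coprime σ τ)
    (R : ℝ) (hR : 0 < R) (φσ φτ : ℝ) (hφσ : 0 ≤ φσ) (hφτ : 0 ≤ φτ)
    (φ₁ φ₂ : ℝ) (hφ₁ : φ₁ ∈ Set.Ico 0 R) (hφ₂ : φ₂ ∈ Set.Ico 0 R)
    (ℓ₁ ℓ₂ k₁ k₂ : ℕ)
    (hℓ₁ : ℓ₁ ≤ (σ + 1) / 2 - 1) (hℓ₂ : ℓ₂ ≤ (σ + 1) / 2 - 1)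
    (hk₁ : k₁ ≤ (τ + 1) / 2 - 1) (hk₂ : k₂ ≤ (τ + 1) / 2 - 1)
    (h1σ : φ₁ = φσ + ℓ₁ * (2 * R / σ)) (h1τ : φ₁ = φτ + k₁ * (2 * R / τ))
    (h2σ : φ₂ = 2 * R / σ - φσ + ℓ₂ * (2 * R / σ))
    (h2τ : φ₂ = 2 * R / τ - φτ + k₂ * (2 * R / τ)) :
    False :=
  candidate_sets_lemma2_general σ τ hσ hτ hcop R φσ φτ φ₁ φ₂ hφ₁ hφ₂ ℓ₁ ℓ₂ k₁ k₂ hℓ₁ hℓ₂ h1σ h1τ h2σ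
    h2τ
end

section
/- Let σ, τ be coprime positive integers, R > 0, and suppose there exist integers 0 ≤ ℓ₁, ℓ₂ ≤ ⌈σ/2⌉−1 and 0 ≤ k₁, k₂ ≤ ⌈τ/2⌉−1 and φ₁, φ₂ ∈ [0,R) with φ₁ = 2R/σ − φ_σ + ℓ₁·2R/σ = φ_τ + k₁·2R/τ and φ₂ = φ_σ + ℓ₂·2R/σ = 2R/τ − φ_τ + k₂·2R/τ. Then a contradiction follows; i.e., Φ_{σ,2} ∩ Φ_{τ,1} and Φ_{σ,1} ∩ Φ_{τ,2} cannot both be nonempty when Φ_{σ,1} ∩ Φ_{τ,1} ≠ ∅. -/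
/-!
Both φ₁ + φ₂ = (1 + ℓ₁ + ℓ₂) · 2R/σ and φ₁ + φ₂ = (1 + k₁ + k₂) · 2R/τ, so
(1 + ℓ₁ + ℓ₂) τ = (1 + k₁ + k₂) σ. By coprimality σ divides 1 + ℓ₁ + ℓ₂, which lies in
[1, σ] by the bounds on ℓ₁, ℓ₂; hence 1 + ℓ₁ + ℓ₂ = σ and φ₁ + φ₂ = 2R, impossible for
φ₁, φ₂ < R.
-/

theorem Nat.eq_of_coprime_of_mul_eq_mul {σ τ m n : ℕ} (hcop : σ.Coprime τ)
    (h : m * τ = n * σ) (hm : 0 < m) (hmσ : m ≤ σ) : m = σ :=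
  le_antisymm hmσ <| Nat.le_of_dvd hm <|
    hcop.dvd_of_dvd_mul_right ⟨n, by rw [h, Nat.mul_comm]⟩

theorem Nat.one_add_add_le_of_le_ceil_half_sub_one {σ ℓ₁ ℓ₂ : ℕ}
    (hℓ₁ : ℓ₁ ≤ (σ + 1) / 2 - 1) (hℓ₂ : ℓ₂ ≤ (σ + 1) / 2 - 1) (hσ : 0 < σ) :
    1 + ℓ₁ + ℓ₂ ≤ σ := by
  omega

theorem Nat.mul_eq_mul_of_cast_mul_div_eq {K : Type*} [Field K] [CharZero K]
    {σ τ m n : ℕ} {a : K} (ha : a ≠ 0) (hσ : σ ≠ 0) (hτ : τ ≠ 0)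
    (h : (m : K) * (a / σ) = n * (a / τ)) : m * τ = n * σ := by
  have hσK : (σ : K) ≠ 0 := Nat.cast_ne_zero.mpr hσ
  have hτK : (τ : K) ≠ 0 := Nat.cast_ne_zero.mpr hτ
  field_simp at h
  rw [Nat.mul_comm n]; exact_mod_cast h

theorem candidate_sets_lemma3_general
    (σ τ : ℕ) (hσ : 0 < σ) (hτ : 0 < τ) (hcop : Nat.Coprime σ τ)
    (R : ℝ) (hR : 0 < R) (φσ φτ : ℝ)
    (φ₁ φ₂ : ℝ) (hφ₁ : φ₁ ∈ Set.Ico 0 R) (hφ₂ : φ₂ ∈ Set.Ico 0 R)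
    (ℓ₁ ℓ₂ k₁ k₂ : ℕ)
    (hℓ₁ : ℓ₁ ≤ (σ + 1) / 2 - 1) (hℓ₂ : ℓ₂ ≤ (σ + 1) / 2 - 1)
    (h1σ : φ₁ = 2 * R / σ - φσ + ℓ₁ * (2 * R / σ))
    (h1τ : φ₁ = φτ + k₁ * (2 * R / τ))
    (h2σ : φ₂ = φσ + ℓ₂ * (2 * R / σ))
    (h2τ : φ₂ = 2 * R / τ - φτ + k₂ * (2 * R / τ)) :
    False := by
  have hsumσ : φ₁ + φ₂ = ((1 + ℓ₁ + ℓ₂ : ℕ) : ℝ) * (2 * R / σ) := by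
    rw [h1σ, h2σ]; push_cast; ring
  have hsumτ : φ₁ + φ₂ = ((1 + k₁ + k₂ : ℕ) : ℝ) * (2 * R / τ) := by
    rw [h1τ, h2τ]; push_cast; ring
  have hmul := Nat.mul_eq_mul_of_cast_mul_div_eq (by positivity) hσ.ne' hτ.ne'
    (hsumσ.symm.trans hsumτ)
  have hm : 1 + ℓ₁ + ℓ₂ = σ := Nat.eq_of_coprime_of_mul_eq_mul hcop hmul (by omega)
    (Nat.one_add_add_le_of_le_ceil_half_sub_one hℓ₁ hℓ₂ hσ)
  have hsum : φ₁ + φ₂ = 2 * R := by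
    rw [hsumσ, hm]; field_simp
  linarith [hφ₁.2, hφ₂.2]

theorem candidate_sets_lemma3
    (σ τ : ℕ) (hσ : 0 < σ) (hτ : 0 < τ) (hcop : Nat.Coprime σ τ)
    (R : ℝ) (hR : 0 < R) (φσ φτ : ℝ) (hφσ : 0 ≤ φσ) (hφτ : 0 ≤ φτ)
    (φ₁ φ₂ : ℝ) (hφ₁ : φ₁ ∈ Set.Ico 0 R) (hφ₂ : φ₂ ∈ Set.Ico 0 R)
    (ℓ₁ ℓ₂ k₁ k₂ : ℕ)
    (hℓ₁ : ℓ₁ ≤ (σ + 1) / 2 - 1) (hℓ₂ : ℓ₂ ≤ (σ + 1) / 2 - 1)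
    (hk₁ : k₁ ≤ (τ + 1) / 2 - 1) (hk₂ : k₂ ≤ (τ + 1) / 2 - 1)
    (h1σ : φ₁ = 2 * R / σ - φσ + ℓ₁ * (2 * R / σ))
    (h1τ : φ₁ = φτ + k₁ * (2 * R / τ))
    (h2σ : φ₂ = φσ + ℓ₂ * (2 * R / σ))
    (h2τ : φ₂ = 2 * R / τ - φτ + k₂ * (2 * R / τ)) :
    False :=
  candidate_sets_lemma3_general σ τ hσ hτ hcop R hR φσ φτ φ₁ φ₂ hφ₁ hφ₂ ℓ₁ ℓ₂ k₁ k₂ hℓ₁ hℓ₂ h1σ h1τ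
    h2σ h2τ
end

section
/- Let n ≥ 1, α_i, φ_i complex with all α_i ≠ 0 and the values exp(φ_i·σ·Δ) pairwise distinct, Δ real nonzero, σ a positive integer. Define f_s = Σ_{i=1}^n α_i·exp(φ_i·s·Δ) and for ν ≥ 1 let H_ν be the ν×ν Hankel matrix with (k+1,ℓ+1) entry f_{(k+ℓ)σ}. Then det H_ν = 0 for all ν > n, and det H_n ≠ 0. -/
open Matrix in
theorem hankel_rank_detects_sparsity (n : ℕ) (hn : 1 ≤ n)
    (α φ : Fin n → ℂ) (hα : ∀ i, α i ≠ 0)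
    (Δ : ℝ) (hΔ : Δ ≠ 0) (σ : ℕ) (hσ : 0 < σ)
    (hdist : Function.Injective fun i => Complex.exp (φ i * σ * Δ))
    (f : ℕ → ℂ) (hf : ∀ s : ℕ, f s = ∑ i, α i * Complex.exp (φ i * s * Δ))
    (H : (ν : ℕ) → Matrix (Fin ν) (Fin ν) ℂ)
    (hH : ∀ (ν : ℕ) (k ℓ : Fin ν), H ν k ℓ = f (((k : ℕ) + ℓ) * σ)) :
    (∀ ν : ℕ, n < ν → (H ν).det = 0) ∧ (H n).det ≠ 0 := by
  set z : Fin n → ℂ := fun i => Complex.exp (φ i * σ * Δ) with hz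
  have hfactor : ∀ (ν : ℕ) (k ℓ : Fin ν),
      H ν k ℓ = ∑ i, (α i * z i ^ (k : ℕ)) * z i ^ (ℓ : ℕ) := by
    intro ν k ℓ
    rw [hH, hf]
    refine Finset.sum_congr rfl fun i _ => ?_
    have : φ i * (((k : ℕ) + ℓ) * σ : ℕ) * Δ
        = (((k : ℕ) + ℓ) : ℕ) * (φ i * σ * Δ) := by push_cast; ring
    rw [this, Complex.exp_nat_mul]
    rw [pow_add]
    ring
  constructor
  · intro ν hν
    -- H ν = A * B with A : ν×n, B : n×ν
    set A : Matrix (Fin ν) (Fin n) ℂ := fun k i => α i * z i ^ (k : ℕ) with hA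
    set B : Matrix (Fin n) (Fin ν) ℂ := fun i ℓ => z i ^ (ℓ : ℕ) with hB
    have hmul : H ν = A * B := by
      ext k ℓ
      rw [Matrix.mul_apply, hfactor]
    -- B.mulVecLin is not injective
    have : ∃ v : Fin ν → ℂ, v ≠ 0 ∧ B.mulVec v = 0 := by
      have hnotinj : ¬ Function.Injective B.mulVecLin := by
        intro hinj
        have := LinearMap.finrank_le_finrank_of_injective hinj
        simp only [Module.finrank_pi, Fintype.card_fin] at this
        omega
      rw [← LinearMap.ker_eq_bot] at hnotinj
      obtain ⟨v, hv, hv0⟩ := Submodule.exists_mem_ne_zero_of_ne_bot hnotinj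
      exact ⟨v, hv0, LinearMap.mem_ker.mp hv⟩
    obtain ⟨v, hv0, hv⟩ := this
    rw [← Matrix.exists_mulVec_eq_zero_iff]
    exact ⟨v, hv0, by rw [hmul, ← Matrix.mulVec_mulVec, hv, Matrix.mulVec_zero]⟩
  · have hmul : H n = (Matrix.vandermonde z)ᵀ * (Matrix.diagonal α * Matrix.vandermonde z) := by
      ext k ℓ
      rw [Matrix.mul_apply, hfactor]
      simp only [Matrix.diagonal_mul, Matrix.transpose_apply, Matrix.vandermonde_apply]
      exact Finset.sum_congr rfl fun i _ => by ring
    have hVdm : (Matrix.vandermonde z).det ≠ 0 :=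
      Matrix.det_vandermonde_ne_zero_iff.mpr hdist
    rw [hmul, Matrix.det_mul, Matrix.det_mul, Matrix.det_transpose, Matrix.det_diagonal]
    exact mul_ne_zero hVdm (mul_ne_zero (Finset.prod_ne_zero_iff.mpr fun i _ => hα i) hVdm)
end
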